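/- Let f satisfy Assumption (strong convexity with parameter μ, L-Lipschitz gradient, global minimizer 0 with f(0)=0). Let B ∈ ℝ^{m×s}, A ∈ ℝ^{m×k}, and z ∈ Δ^k (the unit simplex, z ≥ 0 and ∑ᵢ zᵢ ≤ 1). Define the residual R_B^f(x) = x - B y* where y* = argmin_{y ∈ Δ^s} f(x - By), and R_B^f(A) the matrix whose j-th column is R_B^f(A(:,j)). Then f(R_B^f(Az)) ≤ f(R_B^f(A) z). -/

import Mathlib

noncomputable section

open scoped BigOperators

abbrev E (m : ℕ) := EuclideanSpace ℝ (Fin m)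

def toE {m : ℕ} (x : Fin m → ℝ) : E m := WithLp.toLp 2 x

/-- The unit simplex `Δ = {y | y ≥ 0, ∑ y ≤ 1}`. -/
def simplex (n : Type*) [Fintype n] : Set (n → ℝ) :=
  {y | (∀ i, 0 ≤ y i) ∧ ∑ i, y i ≤ 1}

/-- Assumption 2 of the paper: `f` is `μ`-strongly convex with `L`-Lipschitz
gradient `f'`, and `0` is its global minimizer with `f 0 = 0`. -/
structure GoodF {m : ℕ} (f : E m → ℝ) (f' : E m → E m) (μ L : ℝ) : Prop where
  mu_pos : 0 < μ
  grad : ∀ x, HasGradientAt f (f' x) x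
  lip : ∀ x y : E m, ‖f' x - f' y‖ ≤ L * ‖x - y‖
  sconv : ∀ x y : E m, ∀ δ : ℝ, 0 ≤ δ → δ ≤ 1 →
    f (δ • x + (1 - δ) • y) ≤ δ * f x + (1 - δ) * f y - μ / 2 * δ * (1 - δ) * ‖x - y‖ ^ 2
  f_zero : f 0 = 0
  min_zero : ∀ x, f 0 ≤ f x

/-- A minimizer over the unit simplex of `y ↦ f (x - B y)` (chosen via choice). -/
def argminSimplex {m : ℕ} {n : Type*} [Fintype n] (f : E m → ℝ)
    (B : Matrix (Fin m) n ℝ) (x : E m) : n → ℝ :=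
  Classical.epsilon fun y => y ∈ simplex n ∧
    ∀ z ∈ simplex n, f (x - toE (B.mulVec y)) ≤ f (x - toE (B.mulVec z))

/-- The residual `R_B^f(x) = x - B y*` where `y* = argmin_{y ∈ Δ} f (x - B y)`. -/
def resid {m : ℕ} {n : Type*} [Fintype n] (f : E m → ℝ)
    (B : Matrix (Fin m) n ℝ) (x : E m) : E m :=
  x - toE (B.mulVec (argminSimplex f B x))

/-- Column-wise residual matrix `R_B^f(A)`. -/
def residMat {m : ℕ} {n k : Type*} [Fintype n] (f : E m → ℝ)
    (B : Matrix (Fin m) n ℝ) (A : Matrix (Fin m) k ℝ) : Matrix (Fin m) k ℝ :=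
  fun i j => resid f B (toE fun i' => A i' j) i

/-- `‖N‖_{1,2}`: the maximum `ℓ₂` column norm. -/
def norm12 {m : ℕ} {n : Type*} [Fintype n] (N : Matrix (Fin m) n ℝ) : ℝ :=
  sSup {c | ∃ j, c = ‖toE fun i => N i j‖}

/-- `α(W)`: minimum distance between a column of `W` and the convex hull of the
other columns of `W` and the origin. -/
def alpha {m r : ℕ} (W : Matrix (Fin m) (Fin r) ℝ) : ℝ :=
  sInf {c | ∃ (j : Fin r) (x : Fin r → ℝ), x ∈ simplex (Fin r) ∧ x j = 0 ∧
    c = ‖toE (fun i => W i j) - toE (W.mulVec x)‖}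

/-- `σ(W)`: smallest singular value (`min_{‖z‖₂ ≥ 1} ‖Wz‖₂`) if `m ≥ r`, and `0` if `m < r`. -/
def smin {m r : ℕ} (W : Matrix (Fin m) (Fin r) ℝ) : ℝ :=
  if r ≤ m then sInf {c | ∃ z : Fin r → ℝ, 1 ≤ ‖toE z‖ ∧ c = ‖toE (W.mulVec z)‖} else 0

/-- `[B, x]`: append the column `x` to `B`. -/
def appendCol {m s : ℕ} (B : Matrix (Fin m) (Fin s) ℝ) (x : E m) :
    Matrix (Fin m) (Fin (s + 1)) ℝ :=
  fun i => Fin.snoc (fun j => B i j) (x i)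

/-- `[A, B]`: horizontal concatenation. -/
def appendMat {m k s : ℕ} (A : Matrix (Fin m) (Fin k) ℝ) (B : Matrix (Fin m) (Fin s) ℝ) :
    Matrix (Fin m) (Fin (k + s)) ℝ :=
  fun i => Fin.append (fun j => A i j) (fun j => B i j)

/-- `ω(P) = min (min_i ‖p_i‖₂, (1/√2) min_{i ≠ j} ‖p_i - p_j‖₂)`. -/
def omegaM {m : ℕ} {k : Type*} [Fintype k] (P : Matrix (Fin m) k ℝ) : ℝ :=
  sInf ({c | ∃ i, c = ‖toE fun a => P a i‖} ∪
    {c | ∃ i j, i ≠ j ∧ c = (Real.sqrt 2)⁻¹ * ‖(toE fun a => P a i) - toE fun a => P a j‖})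

/-- `β(W) = min (ν_β(W), γ_β(W)/√2)` as in the paper. -/
def beta {m r : ℕ} (f : E m → ℝ) (W : Matrix (Fin m) (Fin r) ℝ) : ℝ :=
  sInf ({c | ∃ j : Fin r,
      c = ‖resid f (W.submatrix id fun p : {i // i ≠ j} => (p : Fin r)) (toE fun a => W a j)‖} ∪
    {c | ∃ (i j : Fin r) (J : Finset (Fin r)), i ≠ j ∧ i ∉ J ∧ j ∉ J ∧
      c = (Real.sqrt 2)⁻¹ *
        ‖resid f (W.submatrix id fun p : J => (p : Fin r)) (toE fun a => W a i) -
         resid f (W.submatrix id fun p : J => (p : Fin r)) (toE fun a => W a j)‖})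

theorem Matrix.isHermitian_transpose_mul_self {m n α : Type*} [Fintype m] [CommSemiring α]
    [StarRing α] [TrivialStar α] (A : Matrix m n α) : (A.transpose * A).IsHermitian := by
  simpa [Matrix.conjTranspose_eq_transpose_of_trivial] using
    Matrix.isHermitian_conjTranspose_mul_self A

/-- Singular values of `B` in nonincreasing order (`i`-th largest at index `i`). -/
def singVals {m s : ℕ} (B : Matrix (Fin m) (Fin s) ℝ) : Fin s → ℝ := fun i =>
  Real.sqrt (((Matrix.isHermitian_transpose_mul_self B).eigenvalues ∘
    Tuple.sort (Matrix.isHermitian_transpose_mul_self B).eigenvalues) i.rev)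

/-- The spectral norm `‖N‖₂` (ℓ₂ operator norm). -/
def spec {m s : ℕ} (N : Matrix (Fin m) (Fin s) ℝ) : ℝ :=
  ‖LinearMap.toContinuousLinearMap (Matrix.toEuclideanLin N)‖

open Matrix

theorem isCompact_simplex (n : Type*) [Fintype n] : IsCompact (simplex n) := by
  have hsub : simplex n ⊆ Set.Icc 0 1 := fun y ⟨hy0, hy1⟩ =>
    ⟨hy0, fun i => (Finset.single_le_sum (fun j _ => hy0 j) (Finset.mem_univ i)).trans hy1⟩
  have hclosed : IsClosed (simplex n) := by
    have h : simplex n = (⋂ i, {y | 0 ≤ y i}) ∩ {y | ∑ i, y i ≤ 1} := by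
      ext y
      simp [simplex]
    rw [h]
    exact (isClosed_iInter fun i => isClosed_le continuous_const (continuous_apply i)).inter
      (isClosed_le (by fun_prop) continuous_const)
  exact isCompact_Icc.of_isClosed_subset hclosed hsub

theorem zero_mem_simplex (n : Type*) [Fintype n] : (0 : n → ℝ) ∈ simplex n :=
  ⟨fun _ => le_rfl, by simp⟩

theorem mulVec_mem_simplex {n k : Type*} [Fintype n] [Fintype k] (Y : Matrix n k ℝ)
    (hY : ∀ j, (fun i => Y i j) ∈ simplex n) {z : k → ℝ} (hz : z ∈ simplex k) :
    Y *ᵥ z ∈ simplex n := by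
  refine ⟨fun i => Finset.sum_nonneg fun j _ => mul_nonneg ((hY j).1 i) (hz.1 j), ?_⟩
  calc ∑ i, (Y *ᵥ z) i = ∑ j, (∑ i, Y i j) * z j := by
        simp only [mulVec, dotProduct, Finset.sum_mul]
        exact Finset.sum_comm
    _ ≤ ∑ j, z j := Finset.sum_le_sum fun j _ =>
        mul_le_of_le_one_left (hz.1 j) (hY j).2
    _ ≤ 1 := hz.2

section Residual

variable {m : ℕ} {n : Type*} [Fintype n] {f : E m → ℝ}

theorem argminSimplex_spec (hf : Continuous f) (B : Matrix (Fin m) n ℝ) (x : E m) :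
    argminSimplex f B x ∈ simplex n ∧
      ∀ y ∈ simplex n, f (x - toE (B *ᵥ argminSimplex f B x)) ≤ f (x - toE (B *ᵥ y)) := by
  have hcont : Continuous fun y : n → ℝ => f (x - toE (B *ᵥ y)) :=
    hf.comp (continuous_const.sub ((PiLp.continuous_toLp 2 _).comp
      (LinearMap.continuous_of_finiteDimensional B.mulVecLin)))
  obtain ⟨y, hy, hmin⟩ := (isCompact_simplex n).exists_isMinOn ⟨0, zero_mem_simplex n⟩
    hcont.continuousOn
  exact Classical.epsilon_spec (p := fun y => y ∈ simplex n ∧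
    ∀ w ∈ simplex n, f (x - toE (B *ᵥ y)) ≤ f (x - toE (B *ᵥ w))) ⟨y, hy, fun w hw => hmin hw⟩

theorem apply_resid_le (hf : Continuous f) (B : Matrix (Fin m) n ℝ) (x : E m) {y : n → ℝ}
    (hy : y ∈ simplex n) : f (resid f B x) ≤ f (x - toE (B *ᵥ y)) :=
  (argminSimplex_spec hf B x).2 y hy

def argminMat {k : Type*} (f : E m → ℝ) (B : Matrix (Fin m) n ℝ) (A : Matrix (Fin m) k ℝ) :
    Matrix n k ℝ :=
  Matrix.of fun t j => argminSimplex f B (toE fun i => A i j) t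

theorem residMat_eq_sub_mul {k : Type*} (B : Matrix (Fin m) n ℝ) (A : Matrix (Fin m) k ℝ) :
    residMat f B A = A - B * argminMat f B A := by
  ext i j
  simp [residMat, resid, argminMat, toE, Matrix.mul_apply, Matrix.mulVec, dotProduct]

end Residual

theorem GoodF.continuous {m : ℕ} {f : E m → ℝ} {f' : E m → E m} {μ L : ℝ}
    (hf : GoodF f f' μ L) : Continuous f :=
  continuous_iff_continuousAt.2 fun x => (hf.grad x).continuousAt

/- With `Y` the matrix of columnwise minimizers, `Y z` lies in the simplex, so it competes in the
minimization defining `R_B^f(A z)`; and `A z - B (Y z) = R_B^f(A) z`. -/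
theorem stmt1 (m s k : ℕ) (μ L : ℝ) (f : E m → ℝ) (f' : E m → E m) (hf : GoodF f f' μ L)
    (B : Matrix (Fin m) (Fin s) ℝ) (A : Matrix (Fin m) (Fin k) ℝ)
    (z : Fin k → ℝ) (hz : z ∈ simplex (Fin k)) :
    f (resid f B (toE (A.mulVec z))) ≤ f (toE ((residMat f B A).mulVec z)) := by
  have hY : argminMat f B A *ᵥ z ∈ simplex (Fin s) :=
    mulVec_mem_simplex _ (fun j => (argminSimplex_spec hf.continuous B _).1) hz
  calc f (resid f B (toE (A *ᵥ z)))
      ≤ f (toE (A *ᵥ z) - toE (B *ᵥ (argminMat f B A *ᵥ z))) :=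
        apply_resid_le hf.continuous B _ hY
    _ = f (toE (residMat f B A *ᵥ z)) := by
      rw [residMat_eq_sub_mul, sub_mulVec, mulVec_mulVec]
      rfl
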